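/- For any connected graph G of order n ≥ 3, edim_f(G) = 1 if and only if G is a path. -/

import Mathlib

/-!
An edge resolving function `g` must resolve every pair of edges at a vertex `v`. The vertex `v`
itself resolves none of them, and a vertex `z` sees each edge at `v` at distance `d(v,z)` or
`d(v,z) - 1`, so it resolves at most two of the three pairs formed by three edges at `v`. Hence a
vertex of degree at least three forces `∑ g ≥ 3/2`, and minimum degree at least two forces
`(n - 1) ∑ g ≥ n`. So `edim_f(G) = 1` implies maximum degree at most two and a vertex `v₀` of
degree at most one; then every distance class from `v₀` is a single vertex and `G` is a path.
Conversely, in a path the distances from an end vertex `v₀` are injective, so `v₀` alone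
resolves all edges, and two distinct edges always need total weight at least one.
-/

open Finset
open scoped Classical

variable {V : Type*}

/-- Distance from a vertex to an edge: minimum distance to an endpoint. -/
noncomputable def SimpleGraph.edgeDist (G : SimpleGraph V) (e : Sym2 V) (v : V) : ℕ :=
  Sym2.lift ⟨fun a b => min (G.dist a v) (G.dist b v), fun a b => min_comm _ _⟩ e

/-- A set of vertices is an edge resolving set if every pair of distinct edges
is distinguished by some vertex of the set. -/
def SimpleGraph.IsEdgeResolvingSet (G : SimpleGraph V) (S : Set V) : Prop :=
  ∀ e₁ ∈ G.edgeSet, ∀ e₂ ∈ G.edgeSet, e₁ ≠ e₂ →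
    ∃ s ∈ S, G.edgeDist e₁ s ≠ G.edgeDist e₂ s

/-- The edge dimension: minimum cardinality of an edge resolving set. -/
noncomputable def SimpleGraph.edim (G : SimpleGraph V) [Fintype V] : ℕ :=
  sInf {n | ∃ S : Finset V, G.IsEdgeResolvingSet ↑S ∧ S.card = n}

/-- An edge resolving function: a `[0,1]`-valued weighting of the vertices such
that every pair of distinct edges is resolved by total weight at least 1. -/
def SimpleGraph.IsEdgeResolvingFunction (G : SimpleGraph V) [Fintype V] (g : V → ℝ) : Prop :=
  (∀ v, 0 ≤ g v ∧ g v ≤ 1) ∧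
  ∀ e₁ ∈ G.edgeSet, ∀ e₂ ∈ G.edgeSet, e₁ ≠ e₂ →
    1 ≤ ∑ z ∈ Finset.univ.filter (fun z => G.edgeDist e₁ z ≠ G.edgeDist e₂ z), g z

/-- The fractional edge dimension. -/
noncomputable def SimpleGraph.edimf (G : SimpleGraph V) [Fintype V] : ℝ :=
  sInf {x | ∃ g : V → ℝ, G.IsEdgeResolvingFunction g ∧ ∑ v, g v = x}

namespace SimpleGraph

variable {G : SimpleGraph V}

@[simp]
lemma edgeDist_mk (a b v : V) : G.edgeDist s(a, b) v = min (G.dist a v) (G.dist b v) := rfl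

lemma Adj.edgeDist_eq_or {v a : V} (h : G.Adj v a) (z : V) :
    G.edgeDist s(v, a) z = G.dist v z ∨ G.edgeDist s(v, a) z + 1 = G.dist v z := by
  rw [edgeDist_mk, dist_comm (u := v), dist_comm (u := a)]
  rcases h.diff_dist_adj (u := z) with h | h | h <;> omega

lemma exists_adj_dist_eq_of_dist_eq_add_one {u a : V} {k : ℕ} (hd : G.dist u a = k + 1) :
    ∃ y, G.Adj y a ∧ G.dist u y = k := by
  obtain ⟨p, hp⟩ := exists_walk_of_dist_ne_zero (by omega : G.dist u a ≠ 0)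
  have hnil : ¬p.Nil := Walk.not_nil_iff_lt_length.mpr (by omega)
  have hadj := Walk.adj_penultimate hnil
  have hle : G.dist u p.penultimate ≤ k :=
    (dist_le p.dropLast).trans (by rw [Walk.length_dropLast]; omega)
  refine ⟨p.penultimate, hadj, ?_⟩
  rcases hadj.diff_dist_adj (u := u) with h | h | h <;> omega

section Degree

variable [Fintype V] [DecidableRel G.Adj]

lemma eq_of_degree_le_one {w x y : V} (h : G.degree w ≤ 1) (hx : G.Adj w x) (hy : G.Adj w y) :
    x = y :=
  Finset.card_le_one.mp h x (by simpa) y (by simpa)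

lemma eq_or_eq_or_eq_of_degree_le_two {w x y z : V} (h : G.degree w ≤ 2) (hx : G.Adj w x)
    (hy : G.Adj w y) (hz : G.Adj w z) : x = y ∨ x = z ∨ y = z := by
  by_contra! hne
  exact h.not_gt (Finset.two_lt_card.mpr
    ⟨x, by simpa, y, by simpa, z, by simpa, hne.1, hne.2.1, hne.2.2⟩)

lemma dist_injective_of_degree_le (hG : G.Connected) (hdeg : ∀ v, G.degree v ≤ 2) {v₀ : V}
    (hv₀ : G.degree v₀ ≤ 1) : Function.Injective (G.dist v₀) := by
  suffices ∀ k a b, G.dist v₀ a = k → G.dist v₀ b = k → a = b from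
    fun a b h => this _ a b h rfl
  intro k
  induction k with
  | zero =>
    intro a b ha hb
    exact (hG.dist_eq_zero_iff.mp ha).symm.trans (hG.dist_eq_zero_iff.mp hb)
  | succ k ih =>
    intro a b ha hb
    obtain ⟨y, hya, hy⟩ := exists_adj_dist_eq_of_dist_eq_add_one ha
    obtain ⟨y', hyb, hy'⟩ := exists_adj_dist_eq_of_dist_eq_add_one hb
    obtain rfl := ih y y' hy hy'
    -- `a` and `b` are neighbours of `y`; unless `y = v₀`, so is a vertex one step closer to `v₀`
    cases k with
    | zero =>
      obtain rfl := hG.dist_eq_zero_iff.mp hy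
      exact eq_of_degree_le_one hv₀ hya hyb
    | succ k =>
      obtain ⟨u, huy, hu⟩ := exists_adj_dist_eq_of_dist_eq_add_one hy
      rcases eq_or_eq_or_eq_of_degree_le_two (hdeg y) hya hyb huy.symm with h | h | h
      · exact h
      · subst h; omega
      · subst h; omega

end Degree

lemma nonempty_iso_pathGraph_of_dist_injective [Fintype V] (hG : G.Connected) {v₀ : V}
    (hinj : Function.Injective (G.dist v₀)) : Nonempty (G ≃g pathGraph (Fintype.card V)) := by
  have hlt (v : V) : G.dist v₀ v < Fintype.card V := by
    obtain ⟨p, hp, hlen⟩ := hG.exists_path_of_dist v₀ v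
    exact hlen ▸ hp.length_lt
  let f : V → Fin (Fintype.card V) := fun v => ⟨G.dist v₀ v, hlt v⟩
  have hf : Function.Injective f := fun a b h => hinj (congrArg Fin.val h)
  have hadj_of_succ {a b : V} (h : G.dist v₀ a + 1 = G.dist v₀ b) : G.Adj a b := by
    obtain ⟨y, hy, hya⟩ := exists_adj_dist_eq_of_dist_eq_add_one h.symm
    exact hinj hya ▸ hy
  refine ⟨⟨Equiv.ofBijective f ((Fintype.bijective_iff_injective_and_card f).mpr ⟨hf, by simp⟩),
    fun {a b} => ?_⟩⟩
  simp only [Equiv.ofBijective_apply, pathGraph_adj, f]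
  refine ⟨fun h => h.elim hadj_of_succ fun h => (hadj_of_succ h).symm, fun hab => ?_⟩
  have hne := hinj.ne hab.ne
  rcases hab.diff_dist_adj (u := v₀) with h | h | h <;> omega

lemma edgeDist_injOn_of_dist_injective {v₀ : V} (hinj : Function.Injective (G.dist v₀)) :
    Set.InjOn (G.edgeDist · v₀) G.edgeSet := by
  intro e₁ he₁ e₂ he₂ h
  induction e₁ using Sym2.ind with | _ a b => ?_
  induction e₂ using Sym2.ind with | _ c d => ?_
  simp only [edgeDist_mk, dist_comm (v := v₀)] at h
  rw [mem_edgeSet] at he₁ he₂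
  have hab := hinj.ne he₁.ne
  have hcd := hinj.ne he₂.ne
  have hdiff₁ := he₁.diff_dist_adj (u := v₀)
  have hdiff₂ := he₂.diff_dist_adj (u := v₀)
  have : (G.dist v₀ a = G.dist v₀ c ∧ G.dist v₀ b = G.dist v₀ d) ∨
      (G.dist v₀ a = G.dist v₀ d ∧ G.dist v₀ b = G.dist v₀ c) := by omega
  rw [Sym2.eq_iff]
  rcases this with ⟨h₁, h₂⟩ | ⟨h₁, h₂⟩
  · exact .inl ⟨hinj h₁, hinj h₂⟩
  · exact .inr ⟨hinj h₁, hinj h₂⟩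

lemma pathGraph_degree_le_two {n : ℕ} (i : Fin n) : (pathGraph n).degree i ≤ 2 := by
  by_contra! h
  obtain ⟨a, ha, b, hb, c, hc, hab, hac, hbc⟩ := Finset.two_lt_card.mp h
  simp only [mem_neighborFinset, pathGraph_adj] at ha hb hc
  simp only [ne_eq, Fin.ext_iff] at hab hac hbc
  omega

lemma pathGraph_degree_le_one {n : ℕ} {i : Fin n} (hi : i.val = 0) :
    (pathGraph n).degree i ≤ 1 := by
  refine Finset.card_le_one.mpr fun a ha b hb => ?_
  simp only [mem_neighborFinset, pathGraph_adj] at ha hb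
  exact Fin.ext (by omega)

section EdgeResolvingFunction

variable [Fintype V] {g : V → ℝ}

lemma IsEdgeResolvingFunction.nonneg (hg : G.IsEdgeResolvingFunction g) (v : V) : 0 ≤ g v :=
  (hg.1 v).1

lemma edimf_le_sum (hg : G.IsEdgeResolvingFunction g) : G.edimf ≤ ∑ v, g v :=
  csInf_le ⟨0, by rintro _ ⟨g, hg, rfl⟩; exact Finset.sum_nonneg fun v _ => hg.nonneg v⟩
    ⟨g, hg, rfl⟩

lemma le_edimf {c : ℝ} (hex : ∃ g, G.IsEdgeResolvingFunction g)
    (h : ∀ g, G.IsEdgeResolvingFunction g → c ≤ ∑ v, g v) : c ≤ G.edimf := by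
  obtain ⟨g, hg⟩ := hex
  exact le_csInf ⟨_, g, hg, rfl⟩ (by rintro _ ⟨g, hg, rfl⟩; exact h g hg)

-- `sInf ∅ = 0` in `ℝ`
lemma exists_isEdgeResolvingFunction_of_edimf_ne_zero (h : G.edimf ≠ 0) :
    ∃ g, G.IsEdgeResolvingFunction g := by
  by_contra! hno
  refine h ?_
  have hempty : {x | ∃ g, G.IsEdgeResolvingFunction g ∧ ∑ v, g v = x} = ∅ :=
    Set.eq_empty_of_forall_notMem (by rintro x ⟨g, hg, -⟩; exact hno g hg)
  rw [edimf, hempty, Real.sInf_empty]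

lemma isEdgeResolvingFunction_single {v₀ : V} (hv₀ : Set.InjOn (G.edgeDist · v₀) G.edgeSet) :
    G.IsEdgeResolvingFunction (Pi.single v₀ 1) := by
  have hbound (v : V) : 0 ≤ (Pi.single v₀ 1 : V → ℝ) v ∧ (Pi.single v₀ 1 : V → ℝ) v ≤ 1 := by
    rcases eq_or_ne v v₀ with rfl | hv <;> simp [*]
  refine ⟨hbound, fun e₁ h₁ e₂ h₂ hne => ?_⟩
  calc (1 : ℝ) = (Pi.single v₀ 1 : V → ℝ) v₀ := by rw [Pi.single_eq_same]
    _ ≤ _ := Finset.single_le_sum (fun v _ => (hbound v).1)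
      (Finset.mem_filter.mpr ⟨Finset.mem_univ v₀, mt (hv₀ h₁ h₂) hne⟩)

lemma one_le_sum_of_ne (hg : G.IsEdgeResolvingFunction g) {e₁ e₂ : Sym2 V}
    (h₁ : e₁ ∈ G.edgeSet) (h₂ : e₂ ∈ G.edgeSet) (hne : e₁ ≠ e₂) : 1 ≤ ∑ v, g v :=
  (hg.2 e₁ h₁ e₂ h₂ hne).trans (Finset.sum_le_univ_sum_of_nonneg hg.nonneg)

variable [DecidableRel G.Adj]

lemma three_div_two_le_sum_of_two_lt_degree (hg : G.IsEdgeResolvingFunction g) {v : V}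
    (hv : 2 < G.degree v) : 3 / 2 ≤ ∑ w, g w := by
  obtain ⟨a, ha, b, hb, c, hc, hab, hac, hbc⟩ := Finset.two_lt_card.mp hv
  rw [mem_neighborFinset] at ha hb hc
  let R (e₁ e₂ : Sym2 V) : Finset V := {z | G.edgeDist e₁ z ≠ G.edgeDist e₂ z}
  have hR {x y : V} (hx : G.Adj v x) (hy : G.Adj v y) (hxy : x ≠ y) :
      1 ≤ ∑ z ∈ R s(v, x) s(v, y), g z :=
    hg.2 _ hx _ hy (mt Sym2.congr_right.mp hxy)
  -- at `z` the three edges have distance `d(v,z)` or `d(v,z) - 1`, so two of them agree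
  set A := R s(v, a) s(v, b)
  set B := R s(v, a) s(v, c)
  set C := R s(v, b) s(v, c)
  have hdisj : Disjoint (A ∩ B) C := by
    refine Finset.disjoint_left.mpr fun z hz hz' => ?_
    simp only [A, B, C, R, Finset.mem_inter, Finset.mem_filter, Finset.mem_univ, true_and]
      at hz hz'
    have := ha.edgeDist_eq_or z
    have := hb.edgeDist_eq_or z
    have := hc.edgeDist_eq_or z
    omega
  suffices 3 ≤ 2 * ∑ w, g w by linarith
  calc 3 ≤ ∑ z ∈ A, g z + ∑ z ∈ B, g z + ∑ z ∈ C, g z := by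
        linarith [hR ha hb hab, hR ha hc hac, hR hb hc hbc]
    _ = ∑ z ∈ A ∪ B, g z + ∑ z ∈ A ∩ B ∪ C, g z := by
        rw [Finset.sum_union hdisj, ← Finset.sum_union_inter]; ring
    _ ≤ 2 * ∑ w, g w := by
        linarith [Finset.sum_le_univ_sum_of_nonneg (s := A ∪ B) hg.nonneg,
          Finset.sum_le_univ_sum_of_nonneg (s := A ∩ B ∪ C) hg.nonneg]

lemma one_le_sum_sub_of_one_lt_degree (hg : G.IsEdgeResolvingFunction g) {v : V}
    (hv : 1 < G.degree v) : 1 ≤ ∑ w, g w - g v := by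
  obtain ⟨a, ha, b, hb, hab⟩ := Finset.one_lt_card.mp hv
  rw [mem_neighborFinset] at ha hb
  have hsub : ({z | G.edgeDist s(v, a) z ≠ G.edgeDist s(v, b) z} : Finset V) ⊆
      Finset.univ.erase v :=
    fun z hz => Finset.mem_erase.mpr
      ⟨by rintro rfl; exact (Finset.mem_filter.mp hz).2 (by simp), Finset.mem_univ z⟩
  calc 1 ≤ ∑ z ∈ {z | G.edgeDist s(v, a) z ≠ G.edgeDist s(v, b) z}, g z :=
        hg.2 _ ha _ hb (mt Sym2.congr_right.mp hab)
    _ ≤ ∑ z ∈ Finset.univ.erase v, g z :=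
        Finset.sum_le_sum_of_subset_of_nonneg hsub fun z _ _ => hg.nonneg z
    _ = ∑ w, g w - g v := Finset.sum_erase_eq_sub (Finset.mem_univ v)

lemma card_le_mul_sum_of_forall_one_lt_degree (hg : G.IsEdgeResolvingFunction g)
    (hdeg : ∀ v, 1 < G.degree v) : (Fintype.card V : ℝ) ≤ (Fintype.card V - 1) * ∑ w, g w := by
  have := Finset.sum_le_sum fun v (_ : v ∈ Finset.univ) =>
    one_le_sum_sub_of_one_lt_degree hg (hdeg v)
  simp only [Finset.sum_const, Finset.card_univ, nsmul_eq_mul, mul_one,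
    Finset.sum_sub_distrib] at this
  linarith

end EdgeResolvingFunction

lemma nonempty_iso_pathGraph_of_edimf_eq_one [Fintype V] (hG : G.Connected)
    (hn : 2 ≤ Fintype.card V) (h : G.edimf = 1) : Nonempty (G ≃g pathGraph (Fintype.card V)) := by
  have hex := exists_isEdgeResolvingFunction_of_edimf_ne_zero (h ▸ one_ne_zero)
  have hdeg (v : V) : G.degree v ≤ 2 := by
    by_contra! hv
    linarith [le_edimf hex fun g hg => three_div_two_le_sum_of_two_lt_degree hg hv]
  obtain ⟨v₀, hv₀⟩ : ∃ v₀, G.degree v₀ ≤ 1 := by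
    by_contra! hv
    have hpos : (0 : ℝ) < Fintype.card V - 1 := by
      have : (2 : ℝ) ≤ Fintype.card V := by exact_mod_cast hn
      linarith
    have := le_edimf (c := Fintype.card V / (Fintype.card V - 1)) hex fun g hg =>
      (div_le_iff₀ hpos).mpr (by linarith [card_le_mul_sum_of_forall_one_lt_degree hg hv])
    rw [h, div_le_one hpos] at this
    linarith
  exact nonempty_iso_pathGraph_of_dist_injective hG (dist_injective_of_degree_le hG hdeg hv₀)

lemma edimf_eq_one_of_iso_pathGraph [Fintype V] (hG : G.Connected) (hn : 3 ≤ Fintype.card V)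
    (φ : G ≃g pathGraph (Fintype.card V)) : G.edimf = 1 := by
  have hinj := dist_injective_of_degree_le hG
    (fun v => φ.degree_eq v ▸ pathGraph_degree_le_two (φ v)) (v₀ := φ.symm ⟨0, by omega⟩)
    (by rw [← φ.degree_eq, φ.apply_symm_apply]; exact pathGraph_degree_le_one rfl)
  have hres := isEdgeResolvingFunction_single (edgeDist_injOn_of_dist_injective hinj)
  have h₁ : G.Adj (φ.symm ⟨1, by omega⟩) (φ.symm ⟨0, by omega⟩) :=
    φ.symm.map_adj_iff.mpr (by simp [pathGraph_adj])
  have h₂ : G.Adj (φ.symm ⟨1, by omega⟩) (φ.symm ⟨2, by omega⟩) :=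
    φ.symm.map_adj_iff.mpr (by simp [pathGraph_adj])
  refine le_antisymm ((edimf_le_sum hres).trans_eq (Fintype.sum_pi_single' _ _))
    (le_edimf ⟨_, hres⟩ fun g hg => one_le_sum_of_ne hg (G.mem_edgeSet.mpr h₁)
      (G.mem_edgeSet.mpr h₂) ?_)
  simp [Fin.ext_iff]

end SimpleGraph

/-- For a connected graph of order `n ≥ 3`, `edim_f(G) = 1` iff `G` is a path. -/
theorem stmt_9 [Fintype V] (G : SimpleGraph V) (hG : G.Connected)
    (hn : 3 ≤ Fintype.card V) :
    G.edimf = 1 ↔ Nonempty (G ≃g SimpleGraph.pathGraph (Fintype.card V)) :=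
  ⟨SimpleGraph.nonempty_iso_pathGraph_of_edimf_eq_one hG (by omega),
    fun ⟨φ⟩ => SimpleGraph.edimf_eq_one_of_iso_pathGraph hG hn φ⟩
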